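/- There exists an absolute constant C > 0 with the following property: for every sequence (a_n)_{n≥1} of complex numbers with sup_n |a_n| ≤ 1 and every positive integer H, limsup_{N→∞} sup_{t∈ℝ} | (1/N) ∑_{n=1}^{N} a_n e^{2πint} |² ≤ C/H + (C/H) ∑_{h=1}^{H} limsup_{N→∞} | (1/N) ∑_{n=1}^{N} a_n · conj(a_{n+h}) |. -/

import Mathlib

/-!
Modulating `a` by `zⁿ` with `‖z‖ = 1` does not change the absolute values of its
autocorrelations, so it is enough to prove van der Corput's inequality for a single sequence `b`
with `‖bₙ‖ ≤ 1`, uniformly in `b`. Up to an error `O(H²)`, `H ∑_{n<N} bₙ` equals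
`∑_{n<N} ∑_{h<H} b_{n+h}`; Cauchy–Schwarz bounds its square by `N ∑ₙ ‖∑_{h<H} b_{n+h}‖²`, and
expanding the squares produces autocorrelations at lags `|h - h'| < H`, shifted by at most `H`
(another `O(H)` each). After dividing by `H²N²` the error is `O(H²/N)`, which vanishes in the
`limsup`, and the lag-`0` autocorrelation, at most `N`, gives the term `C / H` with `C = 4`.
-/

open Filter Finset ComplexConjugate
open scoped Topology

theorem sum_Icc_one_eq_sum_range {M : Type*} [AddCommMonoid M] (f : ℕ → M) (N : ℕ) :
    ∑ n ∈ Icc 1 N, f n = ∑ k ∈ range N, f (k + 1) := by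
  rw [range_eq_Ico, sum_Ico_add', ← Ico_add_one_right_eq_Icc, zero_add]

theorem norm_mul_conj_le_one {x y : ℂ} (hx : ‖x‖ ≤ 1) (hy : ‖y‖ ≤ 1) : ‖x * conj y‖ ≤ 1 := by
  simpa using mul_le_one₀ hx (norm_nonneg _) hy

theorem norm_sum_range_shift_sub_le {E : Type*} [SeminormedAddCommGroup E] {f : ℕ → E}
    (hf : ∀ n, ‖f n‖ ≤ 1) (N h : ℕ) :
    ‖∑ n ∈ range N, f (n + h) - ∑ n ∈ range N, f n‖ ≤ 2 * h := by
  induction h with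
  | zero => simp
  | succ h ih =>
    have telescope : ∑ n ∈ range N, f (n + (h + 1)) - ∑ n ∈ range N, f (n + h)
        = f (N + h) - f h := by
      simpa only [add_right_comm _ 1 h, add_assoc, zero_add, sum_sub_distrib] using
        sum_range_sub (fun n => f (n + h)) N
    calc ‖∑ n ∈ range N, f (n + (h + 1)) - ∑ n ∈ range N, f n‖
        = ‖(f (N + h) - f h) + (∑ n ∈ range N, f (n + h) - ∑ n ∈ range N, f n)‖ := by
          rw [← telescope, sub_add_sub_cancel]
      _ ≤ ‖f (N + h)‖ + ‖f h‖ + 2 * h :=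
          (norm_add_le _ _).trans (add_le_add (norm_sub_le _ _) ih)
      _ ≤ 2 * ↑(h + 1) := by push_cast; linarith [hf (N + h), hf h]

theorem mul_norm_sum_le_sum_norm_window_add {E : Type*} [NormedAddCommGroup E] [NormedSpace ℝ E]
    {b : ℕ → E} (hb : ∀ n, ‖b n‖ ≤ 1) (N H : ℕ) :
    H * ‖∑ n ∈ range N, b n‖ ≤ ∑ n ∈ range N, ‖∑ h ∈ range H, b (n + h)‖ + 2 * H ^ 2 := by
  have shift_error : ‖∑ h ∈ range H, (∑ n ∈ range N, b (n + h) - ∑ n ∈ range N, b n)‖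
      ≤ 2 * H ^ 2 := by
    refine (norm_sum_le_of_le _ fun h hh => (norm_sum_range_shift_sub_le hb N h).trans
      (show 2 * (h : ℝ) ≤ 2 * H by gcongr; exact (mem_range.mp hh).le)).trans_eq ?_
    simp only [sum_const, card_range, nsmul_eq_mul]; ring
  rw [sum_sub_distrib, sum_comm, sum_const, card_range] at shift_error
  calc H * ‖∑ n ∈ range N, b n‖ = ‖H • ∑ n ∈ range N, b n‖ := by
        rw [RCLike.norm_nsmul ℝ, nsmul_eq_mul]
    _ ≤ ‖∑ n ∈ range N, ∑ h ∈ range H, b (n + h)‖ + 2 * H ^ 2 := by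
        refine (norm_le_norm_add_norm_sub' _ (∑ n ∈ range N, ∑ h ∈ range H, b (n + h))).trans ?_
        rw [norm_sub_rev]
        gcongr
    _ ≤ ∑ n ∈ range N, ‖∑ h ∈ range H, b (n + h)‖ + 2 * H ^ 2 := by gcongr; exact norm_sum_le _ _

theorem sum_range_sum_range_le_two_nsmul_sum_triangle {M : Type*} [AddCommMonoid M] [PartialOrder M]
    [IsOrderedAddMonoid M] {F : ℕ → ℕ → M} (hsymm : ∀ i j, F i j = F j i) (hdiag : ∀ i, 0 ≤ F i i)
    (H : ℕ) :
    ∑ i ∈ range H, ∑ j ∈ range H, F i j ≤ 2 • ∑ j ∈ range H, ∑ i ∈ range (j + 1), F i j := by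
  induction H with
  | zero => simp
  | succ H ih =>
    calc ∑ i ∈ range (H + 1), ∑ j ∈ range (H + 1), F i j
        = ∑ i ∈ range H, ∑ j ∈ range H, F i j + 2 • ∑ i ∈ range H, F i H + F H H := by
          simp only [sum_range_succ, sum_add_distrib, two_nsmul, hsymm H]
          abel
      _ ≤ 2 • ∑ j ∈ range H, ∑ i ∈ range (j + 1), F i j + 2 • ∑ i ∈ range H, F i H
            + 2 • F H H := by
          gcongr
          rw [two_nsmul]
          exact le_add_of_nonneg_right (hdiag H)
      _ = 2 • ∑ j ∈ range (H + 1), ∑ i ∈ range (j + 1), F i j := by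
          rw [sum_range_succ _ H, sum_range_succ (fun i => F i H)]
          simp only [smul_add, add_assoc]

theorem norm_sum_shift_mul_conj_le (b : ℕ → ℂ) (hb : ∀ n, ‖b n‖ ≤ 1) (N : ℕ) {i j : ℕ}
    (hij : i ≤ j) :
    ‖∑ n ∈ range N, b (n + i) * conj (b (n + j))‖
      ≤ ‖∑ n ∈ range N, b n * conj (b (n + (j - i)))‖ + 2 * i := by
  obtain ⟨d, rfl⟩ := Nat.exists_eq_add_of_le hij
  have shift := norm_sum_range_shift_sub_le (fun n => norm_mul_conj_le_one (hb n) (hb (n + d))) N i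
  simp only [← add_assoc, add_tsub_cancel_left] at shift ⊢
  exact (norm_le_norm_add_norm_sub' _ _).trans (by linarith)

theorem sum_norm_sq_sum_le_sum_sum_norm {ι κ : Type*} (s : Finset ι) (t : Finset κ)
    (w : ι → κ → ℂ) :
    ∑ n ∈ t, ‖∑ i ∈ s, w i n‖ ^ 2 ≤ ∑ i ∈ s, ∑ j ∈ s, ‖∑ n ∈ t, w i n * conj (w j n)‖ := by
  have expand : ((∑ n ∈ t, ‖∑ i ∈ s, w i n‖ ^ 2 : ℝ) : ℂ)
      = ∑ i ∈ s, ∑ j ∈ s, ∑ n ∈ t, w i n * conj (w j n) := by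
    simp_rw [Complex.ofReal_sum, Complex.ofReal_pow, ← Complex.mul_conj', map_sum, sum_mul_sum]
    rw [sum_comm]
    exact sum_congr rfl fun i _ => sum_comm
  calc ∑ n ∈ t, ‖∑ i ∈ s, w i n‖ ^ 2 = ‖((∑ n ∈ t, ‖∑ i ∈ s, w i n‖ ^ 2 : ℝ) : ℂ)‖ := by
        rw [Complex.norm_of_nonneg (by positivity)]
    _ ≤ _ := by
        rw [expand]
        exact (norm_sum_le _ _).trans (sum_le_sum fun i _ => norm_sum_le _ _)

theorem sum_norm_sq_window_le (b : ℕ → ℂ) (hb : ∀ n, ‖b n‖ ≤ 1) (N H : ℕ) :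
    ∑ n ∈ range N, ‖∑ h ∈ range H, b (n + h)‖ ^ 2
      ≤ 2 * H * ∑ d ∈ range H, ‖∑ n ∈ range N, b n * conj (b (n + d))‖ + 4 * H ^ 3 := by
  set D : ℕ → ℝ := fun d => ‖∑ n ∈ range N, b n * conj (b (n + d))‖
  have symm (i j : ℕ) : ‖∑ n ∈ range N, b (n + i) * conj (b (n + j))‖
      = ‖∑ n ∈ range N, b (n + j) * conj (b (n + i))‖ := by
    rw [← Complex.norm_conj, map_sum]
    simp only [map_mul, Complex.conj_conj, mul_comm]
  have row {j : ℕ} (hj : j < H) : ∑ i ∈ range (j + 1), ‖∑ n ∈ range N, b (n + i) * conj (b (n + j))‖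
      ≤ ∑ d ∈ range H, D d + 2 * H ^ 2 := by
    calc ∑ i ∈ range (j + 1), ‖∑ n ∈ range N, b (n + i) * conj (b (n + j))‖
        ≤ ∑ i ∈ range (j + 1), (D (j - i) + 2 * H) := by
          refine sum_le_sum fun i hi => ?_
          have hij : i ≤ j := Nat.lt_succ_iff.mp (mem_range.mp hi)
          refine (norm_sum_shift_mul_conj_le b hb N hij).trans ?_
          have : (i : ℝ) ≤ H := by exact_mod_cast (hij.trans hj.le)
          simp only [D]; linarith
      _ = ∑ d ∈ range (j + 1), D d + (j + 1) * (2 * H) := by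
          rw [sum_add_distrib, ← sum_range_reflect D]; simp
      _ ≤ ∑ d ∈ range H, D d + H * (2 * H) := by
          gcongr <;> exact_mod_cast hj
      _ = ∑ d ∈ range H, D d + 2 * H ^ 2 := by ring
  calc ∑ n ∈ range N, ‖∑ h ∈ range H, b (n + h)‖ ^ 2
      ≤ ∑ i ∈ range H, ∑ j ∈ range H, ‖∑ n ∈ range N, b (n + i) * conj (b (n + j))‖ :=
        sum_norm_sq_sum_le_sum_sum_norm (range H) (range N) fun i n => b (n + i)
    _ ≤ 2 • ∑ j ∈ range H, ∑ i ∈ range (j + 1), ‖∑ n ∈ range N, b (n + i) * conj (b (n + j))‖ :=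
        sum_range_sum_range_le_two_nsmul_sum_triangle symm (fun _ => norm_nonneg _) H
    _ ≤ 2 * ∑ _j ∈ range H, (∑ d ∈ range H, D d + 2 * H ^ 2) := by
        rw [two_nsmul, ← two_mul]
        gcongr with j hj
        exact row (mem_range.mp hj)
    _ = 2 * H * ∑ d ∈ range H, D d + 4 * H ^ 3 := by
        simp only [sum_const, card_range, smul_add, nsmul_eq_mul]; ring

theorem sq_mul_norm_sum_range_le (b : ℕ → ℂ) (hb : ∀ n, ‖b n‖ ≤ 1) (N H : ℕ) :
    (H * ‖∑ n ∈ range N, b n‖) ^ 2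
      ≤ 4 * H * N * ∑ d ∈ range H, ‖∑ n ∈ range N, b n * conj (b (n + d))‖
        + 8 * H ^ 3 * N + 8 * H ^ 4 := by
  set X := ∑ n ∈ range N, ‖∑ h ∈ range H, b (n + h)‖
  have window := mul_norm_sum_le_sum_norm_window_add hb N H
  have cauchy_schwarz : X ^ 2 ≤ N * ∑ n ∈ range N, ‖∑ h ∈ range H, b (n + h)‖ ^ 2 := by
    simpa using sq_sum_le_card_mul_sum_sq (s := range N)
      (f := fun n => ‖∑ h ∈ range H, b (n + h)‖)
  have energy := sum_norm_sq_window_le b hb N H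
  have hX : 0 ≤ X := sum_nonneg fun _ _ => norm_nonneg _
  calc (H * ‖∑ n ∈ range N, b n‖) ^ 2 ≤ (X + 2 * H ^ 2) ^ 2 := by gcongr
    _ ≤ 2 * X ^ 2 + 8 * H ^ 4 := by nlinarith [sq_nonneg (X - 2 * H ^ 2)]
    _ ≤ _ := by nlinarith [mul_le_mul_of_nonneg_left energy (Nat.cast_nonneg N)]

theorem norm_sum_mul_pow_mul_conj {z : ℂ} (hz : ‖z‖ = 1) (a : ℕ → ℂ) (s : Finset ℕ) (d : ℕ) :
    ‖∑ n ∈ s, a n * z ^ n * conj (a (n + d) * z ^ (n + d))‖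
      = ‖∑ n ∈ s, a n * conj (a (n + d))‖ := by
  have hz' : z * conj z = 1 := by rw [Complex.mul_conj', hz]; simp
  have term (n : ℕ) : a n * z ^ n * conj (a (n + d) * z ^ (n + d))
      = a n * conj (a (n + d)) * conj z ^ d := by
    calc a n * z ^ n * conj (a (n + d) * z ^ (n + d))
        = a n * conj (a (n + d)) * (z * conj z) ^ n * conj z ^ d := by
          rw [map_mul, map_pow, pow_add]; ring
      _ = _ := by rw [hz', one_pow, mul_one]
  simp_rw [term, ← sum_mul, norm_mul, norm_pow, Complex.norm_conj, hz, one_pow, mul_one]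

theorem norm_average_Icc_sq_le (b : ℕ → ℂ) (hb : ∀ n, ‖b n‖ ≤ 1) {N H : ℕ} (hN : 1 ≤ N)
    (hH : 1 ≤ H) :
    ‖(1 / (N : ℂ)) * ∑ n ∈ Icc 1 N, b n‖ ^ 2
      ≤ 4 / H + 4 / H * ∑ h ∈ Icc 1 H, ‖(1 / (N : ℂ)) * ∑ n ∈ Icc 1 N, b n * conj (b (n + h))‖
        + 16 * H ^ 2 / N := by
  have norm_average (w : ℂ) : ‖(1 / (N : ℂ)) * w‖ = ‖w‖ / N := by
    rw [norm_mul, one_div, norm_inv, Complex.norm_natCast, inv_mul_eq_div]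
  set D : ℕ → ℝ := fun d => ‖∑ n ∈ Icc 1 N, b n * conj (b (n + d))‖
  have vdc := sq_mul_norm_sum_range_le (fun k => b (k + 1)) (fun k => hb _) N H
  have shift (d : ℕ) : ‖∑ n ∈ range N, b (n + 1) * conj (b (n + d + 1))‖ = D d := by
    simp only [D, sum_Icc_one_eq_sum_range, add_right_comm _ d 1]
  simp only [shift, ← sum_Icc_one_eq_sum_range b] at vdc
  have hD0 : D 0 ≤ N := by
    simpa [D] using norm_sum_le_of_le (Icc 1 N) fun n _ => norm_mul_conj_le_one (hb n) (hb (n + 0))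
  have lag_sum : ∑ d ∈ range H, D d ≤ N + ∑ h ∈ Icc 1 H, D h := by
    calc ∑ d ∈ range H, D d ≤ ∑ d ∈ range (H + 1), D d := by gcongr; omega
      _ = D 0 + ∑ h ∈ Icc 1 H, D h := by rw [sum_range_succ', sum_Icc_one_eq_sum_range, add_comm]
      _ ≤ N + ∑ h ∈ Icc 1 H, D h := by gcongr
  simp only [norm_average, ← sum_div]
  set S := ‖∑ n ∈ Icc 1 N, b n‖
  set R := ∑ h ∈ Icc 1 H, D h
  have hN' : (1 : ℝ) ≤ N := by exact_mod_cast hN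
  have hH' : (1 : ℝ) ≤ H := by exact_mod_cast hH
  have hR : 0 ≤ R := sum_nonneg fun _ _ => norm_nonneg _
  rw [← mul_le_mul_iff_left₀ (by positivity : (0 : ℝ) < H ^ 2 * N ^ 2)]
  calc (S / N) ^ 2 * (H ^ 2 * N ^ 2) = (H * S) ^ 2 := by field_simp
    _ ≤ 4 * H * N * (N + R) + 8 * H ^ 3 * N + 8 * H ^ 4 := by
        refine vdc.trans ?_
        gcongr
    _ ≤ 4 * H * N ^ 2 + 4 * H * N * R + 16 * H ^ 4 * N := by
        have h34 : (H : ℝ) ^ 3 ≤ H ^ 4 := pow_le_pow_right₀ hH' (by norm_num)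
        have h4N : (H : ℝ) ^ 4 ≤ H ^ 4 * N := le_mul_of_one_le_right (by positivity) hN'
        nlinarith
    _ = (4 / H + 4 / H * (R / N) + 16 * H ^ 2 / N) * (H ^ 2 * N ^ 2) := by
        field_simp

theorem norm_average_le_one {c : ℕ → ℂ} (hc : ∀ n, ‖c n‖ ≤ 1) (N : ℕ) :
    ‖(1 / (N : ℂ)) * ∑ n ∈ Icc 1 N, c n‖ ≤ 1 := by
  rw [norm_mul, one_div, norm_inv, Complex.norm_natCast, inv_mul_eq_div]
  exact div_le_one_of_le₀ ((norm_sum_le_of_le _ fun n _ => hc n).trans (by simp))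
    (Nat.cast_nonneg N)

theorem norm_average_modulated_sq_le (a : ℕ → ℂ) (ha : ∀ n, ‖a n‖ ≤ 1) {z : ℂ} (hz : ‖z‖ = 1)
    {N H : ℕ} (hN : 1 ≤ N) (hH : 1 ≤ H) :
    ‖(1 / (N : ℂ)) * ∑ n ∈ Icc 1 N, a n * z ^ n‖ ^ 2
      ≤ 4 / H + 4 / H * ∑ h ∈ Icc 1 H, ‖(1 / (N : ℂ)) * ∑ n ∈ Icc 1 N, a n * conj (a (n + h))‖
        + 16 * H ^ 2 / N := by
  have hb (n : ℕ) : ‖a n * z ^ n‖ ≤ 1 := by simpa [hz] using ha n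
  simpa only [norm_mul (1 / (N : ℂ)), norm_sum_mul_pow_mul_conj hz] using
    norm_average_Icc_sq_le (fun n => a n * z ^ n) hb hN hH

theorem eventually_sum_lt_sum_limsup_add {α ι : Type*} {f : Filter α} (s : Finset ι)
    {r : ι → α → ℝ} (hr : ∀ i ∈ s, IsBoundedUnder (· ≤ ·) f (r i)) {ε : ℝ} (hε : 0 < ε) :
    ∀ᶠ x in f, ∑ i ∈ s, r i x < ∑ i ∈ s, limsup (r i) f + ε := by
  classical
  induction s using Finset.induction_on generalizing ε with
  | empty => simpa using Eventually.of_forall fun _ => hε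
  | insert a s ha ih =>
    filter_upwards [eventually_lt_of_limsup_lt (lt_add_of_pos_right _ (half_pos hε))
        (hr a (mem_insert_self a s)),
      ih (fun i hi => hr i (mem_insert_of_mem hi)) (half_pos hε)] with x hxa hxs
    rw [sum_insert ha, sum_insert ha]
    linarith

theorem limsup_le_add_mul_sum_limsup {α ι : Type*} {f : Filter α} (s : Finset ι)
    {u e : α → ℝ} {r : ι → α → ℝ} {b c : ℝ} (hc : 0 ≤ c) (hu : IsCoboundedUnder (· ≤ ·) f u)
    (hr : ∀ i ∈ s, IsBoundedUnder (· ≤ ·) f (r i)) (he : Tendsto e f (𝓝 0))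
    (h : ∀ᶠ x in f, u x ≤ b + c * ∑ i ∈ s, r i x + e x) :
    limsup u f ≤ b + c * ∑ i ∈ s, limsup (r i) f := by
  refine le_of_forall_pos_le_add fun ε hε => limsup_le_of_le hu ?_
  have hδ : 0 < ε / (2 * (c + 1)) := by positivity
  filter_upwards [h, eventually_sum_lt_sum_limsup_add s hr hδ,
    he.eventually_lt_const (half_pos hε)] with x hx hsum herr
  have hcδ : c * (ε / (2 * (c + 1))) ≤ ε / 2 := by
    rw [mul_div_assoc', div_le_div_iff₀ (by positivity) two_pos]
    nlinarith
  nlinarith [mul_le_mul_of_nonneg_left hsum.le hc]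

/-- the limsup Wiener–Wintner van der Corput inequality: there is an absolute
constant `C > 0` such that for every complex sequence with `|aₙ| ≤ 1` and every `H ≥ 1`,
`limsup_N sup_t |(1/N) ∑_{n=1}^N aₙ e^{2πint}|²
  ≤ C/H + (C/H) ∑_{h=1}^H limsup_N |(1/N) ∑_{n=1}^N aₙ conj(a_{n+h})|`. -/
theorem vdc_wiener_wintner_limsup :
    ∃ C : ℝ, 0 < C ∧
      ∀ (a : ℕ → ℂ), (∀ n, ‖a n‖ ≤ 1) →
      ∀ (H : ℕ), 1 ≤ H →
        limsup (fun N : ℕ =>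
            ⨆ t : ℝ, ‖(1 / (N : ℂ)) * ∑ n ∈ Finset.Icc 1 N,
              a n * Complex.exp (2 * (Real.pi : ℂ) * Complex.I * (n : ℂ) * (t : ℂ))‖ ^ 2)
          atTop
          ≤ C / H + (C / H) * ∑ h ∈ Finset.Icc 1 H,
              limsup (fun N : ℕ =>
                ‖(1 / (N : ℂ)) * ∑ n ∈ Finset.Icc 1 N,
                  a n * (starRingEnd ℂ) (a (n + h))‖) atTop := by
  refine ⟨4, four_pos, fun a ha H hH => ?_⟩
  have character (n : ℕ) (t : ℝ) : Complex.exp (2 * Real.pi * Complex.I * n * t)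
      = Complex.exp (2 * Real.pi * Complex.I * t) ^ n := by
    rw [← Complex.exp_nat_mul]; ring_nf
  have unimodular (t : ℝ) : ‖Complex.exp (2 * Real.pi * Complex.I * t)‖ = 1 := by
    rw [Complex.norm_exp]; simp
  refine limsup_le_add_mul_sum_limsup (Icc 1 H) (by positivity)
    (isCoboundedUnder_le_of_le atTop fun N => Real.iSup_nonneg fun t => sq_nonneg _)
    (fun h _ => isBoundedUnder_of ⟨1, fun N =>
      norm_average_le_one (fun n => norm_mul_conj_le_one (ha n) (ha (n + h))) N⟩)
    (by simpa using tendsto_const_div_atTop_nhds_zero_nat (16 * (H : ℝ) ^ 2)) ?_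
  filter_upwards [eventually_ge_atTop 1] with N hN
  refine ciSup_le fun t => ?_
  simpa only [character] using norm_average_modulated_sq_le a ha (unimodular t) hN hH
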